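/- arXiv:1211.2339 — 3 statements merged into one kernel-verified Lean document; each statement's English description precedes it below -/
import Mathlib

section
/- If X is a complex Banach space with a shrinking reverse monotone finite dimensional decomposition, i.e. a shrinking FDD whose canonical partial sum projections P_n satisfy ‖I - P_n‖ = 1 for all n, then the cluster value theorem holds for A_u(B) at 0: for every f ∈ A_u(B), Cl_B(f, 0) = f̂(M₀(B)). -/
open Metric Filter Topology

namespace ClusterValue

variable (X : Type*) [NormedAddCommGroup X] [NormedSpace ℂ X]

/-- Membership in `A_u(B)`: analytic on the open unit ball, bounded there,
and uniformly continuous there. -/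
def MemAu (f : X → ℂ) : Prop :=
  AnalyticOn ℂ f (ball (0 : X) 1) ∧ (∃ C : ℝ, ∀ x ∈ ball (0 : X) 1, ‖f x‖ ≤ C) ∧
    UniformContinuousOn f (ball (0 : X) 1)

/-- Membership in `H^∞(B)`: analytic on the open unit ball and bounded there. -/
def MemHinf (f : X → ℂ) : Prop :=
  AnalyticOn ℂ f (ball (0 : X) 1) ∧ (∃ C : ℝ, ∀ x ∈ ball (0 : X) 1, ‖f x‖ ≤ C)

/-- A character (nonzero continuous multiplicative linear functional) of the algebra
of functions on the open unit ball of `X` determined by the membership predicate `Mem`.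
Functions are identified when they agree on the ball. -/
structure Character (Mem : (X → ℂ) → Prop) : Type _ where
  toFun : (X → ℂ) → ℂ
  congr' : ∀ f g, Mem f → Mem g → (∀ x ∈ ball (0 : X) 1, f x = g x) → toFun f = toFun g
  map_add' : ∀ f g, Mem f → Mem g → toFun (f + g) = toFun f + toFun g
  map_mul' : ∀ f g, Mem f → Mem g → toFun (f * g) = toFun f * toFun g
  map_smul' : ∀ (c : ℂ) (f), Mem f → toFun (c • f) = c * toFun f
  map_one' : toFun 1 = 1
  continuous' : ∃ C : ℝ, ∀ (f : X → ℂ) (M : ℝ), Mem f →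
    (∀ x ∈ ball (0 : X) 1, ‖f x‖ ≤ M) → ‖toFun f‖ ≤ C * M

variable {X}

/-- The fiber over `0`: characters annihilating all continuous linear functionals. -/
def Character.inFiberZero {Mem : (X → ℂ) → Prop} (τ : Character X Mem) : Prop :=
  ∀ φ : X →L[ℂ] ℂ, τ.toFun ⇑φ = 0

/-- The fiber over `x'' ∈ X**`. -/
def Character.inFiber {Mem : (X → ℂ) → Prop} (τ : Character X Mem)
    (x'' : (X →L[ℂ] ℂ) →L[ℂ] ℂ) : Prop :=
  ∀ φ : X →L[ℂ] ℂ, τ.toFun ⇑φ = x'' φ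

variable (X)

/-- The cluster set of `f` at `0`: limits of `f` along weakly null nets (filters) in the ball. -/
def clusterSetZero (f : X → ℂ) : Set ℂ :=
  {z | ∃ l : Filter X, l.NeBot ∧ l ≤ 𝓟 (ball (0 : X) 1) ∧
    (∀ φ : X →L[ℂ] ℂ, Tendsto (fun x => φ x) l (𝓝 0)) ∧ Tendsto f l (𝓝 z)}

/-- The cluster set of `f` at `x'' ∈ X**`: limits of `f` along nets in the ball converging
weak-star to `x''`. -/
def clusterSet (f : X → ℂ) (x'' : (X →L[ℂ] ℂ) →L[ℂ] ℂ) : Set ℂ :=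
  {z | ∃ l : Filter X, l.NeBot ∧ l ≤ 𝓟 (ball (0 : X) 1) ∧
    (∀ φ : X →L[ℂ] ℂ, Tendsto (fun x => φ x) l (𝓝 (x'' φ))) ∧ Tendsto f l (𝓝 z)}

/-- A finite rank (bounded linear) operator. -/
def FiniteRank (S : X →L[ℂ] X) : Prop :=
  FiniteDimensional ℂ ↥(LinearMap.range (S : X →ₗ[ℂ] X))

/-- Finite type polynomials: the subalgebra of functions generated by the
continuous linear functionals (and constants). -/
def IsFiniteTypePoly (p : X → ℂ) : Prop :=
  p ∈ Algebra.adjoin ℂ (Set.range fun φ : X →L[ℂ] ℂ => (⇑φ : X → ℂ))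

/-- Membership in `A(B)`: uniform limits on the ball of finite type polynomials. -/
def MemA (f : X → ℂ) : Prop :=
  ∀ ε > (0 : ℝ), ∃ p : X → ℂ, IsFiniteTypePoly X p ∧ ∀ x ∈ ball (0 : X) 1, ‖f x - p x‖ ≤ ε

/-- A continuous polynomial: a finite sum of (diagonals of) continuous multilinear maps. -/
def IsContPoly (p : X → ℂ) : Prop :=
  ∃ (N : ℕ) (M : ∀ k : ℕ, ContinuousMultilinearMap ℂ (fun _ : Fin k => X) ℂ),
    ∀ x, p x = ∑ k ∈ Finset.range N, M k (fun _ => x)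

end ClusterValue

/-!
A cluster value along a weakly null net gives a character in the fiber over `0`: take limits
along an ultrafilter finer than the net.

Conversely let `τ` be such a character and `T = I - P N`, a contraction by reverse monotonicity,
so that segments from `x` to `T x` stay in the ball. Since `I - T` has finite rank,
`x - T x = ∑ j, ψ j x • b j` with `ψ j ∈ X*`. Cutting the segment from `x` to `T x` into `m`
steps, first order Taylor expansions write `f - f ∘ T`, up to an error `O(1/m)`, as
`∑ j, ψ j * h j` with `h j ∈ A_u(B)`; since `τ` kills `X*` and is continuous,
`τ (f ∘ T) = τ f`. This needs bounds on the derivatives of `f`, so it is first proved for `f`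
analytic on a larger ball and then passed to all of `A_u(B)` through the dilations `f (r • x)`.
Now `τ (f ∘ T)` is approximated by values `f (T x)` with `‖x‖ < 1`, and for `φ` in a finite
subset of `X*` the values `φ (T x) = (φ - φ ∘ P N) x` are small once `N` is large, because the
decomposition is shrinking. These points form a weakly null net along which `f → τ f`.
-/

open Metric Filter Topology Set

section UniformContinuity

variable {α : Type*} [PseudoMetricSpace α] {s : Set α}

theorem UniformContinuousOn.add {E : Type*} [SeminormedAddCommGroup E] {f g : α → E}
    (hf : UniformContinuousOn f s) (hg : UniformContinuousOn g s) :
    UniformContinuousOn (f + g) s :=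
  uniformContinuousOn_iff_restrict.mpr
    ((uniformContinuousOn_iff_restrict.mp hf).add (uniformContinuousOn_iff_restrict.mp hg))

theorem UniformContinuousOn.mul_of_bounded {R : Type*} [SeminormedRing R] {f g : α → R} {C : ℝ}
    (hf : UniformContinuousOn f s) (hg : UniformContinuousOn g s)
    (hfC : ∀ x ∈ s, ‖f x‖ ≤ C) (hgC : ∀ x ∈ s, ‖g x‖ ≤ C) :
    UniformContinuousOn (f * g) s := by
  rw [Metric.uniformContinuousOn_iff_le] at *
  intro ε hε
  set K := |C| + 1
  have hK : 0 < K := by positivity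
  obtain ⟨δf, hδf, Hf⟩ := hf (ε / (2 * K)) (by positivity)
  obtain ⟨δg, hδg, Hg⟩ := hg (ε / (2 * K)) (by positivity)
  refine ⟨min δf δg, by positivity, fun x hx y hy hxy => ?_⟩
  have hfx : ‖f x‖ ≤ K := (hfC x hx).trans ((le_abs_self C).trans (by linarith))
  have hgy : ‖g y‖ ≤ K := (hgC y hy).trans ((le_abs_self C).trans (by linarith))
  have hdf := Hf x hx y hy (hxy.trans (min_le_left _ _))
  have hdg := Hg x hx y hy (hxy.trans (min_le_right _ _))
  rw [dist_eq_norm] at hdf hdg ⊢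
  calc ‖f x * g x - f y * g y‖ = ‖f x * (g x - g y) + (f x - f y) * g y‖ := by noncomm_ring
    _ ≤ K * (ε / (2 * K)) + ε / (2 * K) * K := by
      refine (norm_add_le _ _).trans (add_le_add ?_ ?_) <;>
        refine (norm_mul_le _ _).trans ?_ <;> gcongr
    _ = ε := by field_simp; ring

end UniformContinuity

section Cauchy

variable {E F : Type*} [NormedAddCommGroup E] [NormedSpace ℂ E]
  [NormedAddCommGroup F] [NormedSpace ℂ F] {g : E → F} {a : E} {r R M : ℝ}

theorem norm_fderiv_le_of_forall_norm_le (hg : DifferentiableOn ℂ g (ball a R))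
    (hM : ∀ z ∈ ball a R, ‖g z‖ ≤ M) (hrR : r < R) {y : E} (hy : y ∈ ball a r) :
    ‖fderiv ℂ g y‖ ≤ 2 * M / (R - r) := by
  have hsub : ball y (R - r) ⊆ ball a R := ball_subset_ball' (by linarith [mem_ball.mp hy])
  refine Complex.norm_fderiv_le_div_of_mapsTo_ball (hg.mono hsub) (fun z hz => ?_) (by linarith)
  rw [mem_closedBall, dist_eq_norm]
  linarith [norm_sub_le (g z) (g y), hM z (hsub hz), hM y (hsub (mem_ball_self (by linarith)))]

theorem exists_lipschitzOnWith_of_forall_norm_le (hg : DifferentiableOn ℂ g (ball a R))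
    (hM : ∀ z ∈ ball a R, ‖g z‖ ≤ M) (hrR : r < R) : ∃ K, LipschitzOnWith K g (ball a r) := by
  refine ⟨(2 * M / (R - r)).toNNReal, (convex_ball a r).lipschitzOnWith_of_nnnorm_fderiv_le
    (fun y hy => hg.differentiableAt (isOpen_ball.mem_nhds (ball_subset_ball hrR.le hy)))
    fun y hy => ?_⟩
  rw [← NNReal.coe_le_coe, coe_nnnorm]
  exact (norm_fderiv_le_of_forall_norm_le hg hM hrR hy).trans (Real.le_coe_toNNReal _)

theorem norm_sub_sub_fderiv_le {s : Set E} {K : NNReal}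
    (hg : ∀ x ∈ s, DifferentiableAt ℂ g x) (hK : LipschitzOnWith K (fderiv ℂ g) s)
    (hs : Convex ℝ s) {y z : E} (hy : y ∈ s) (hz : z ∈ s) :
    ‖g z - g y - fderiv ℂ g y (z - y)‖ ≤ K * ‖z - y‖ ^ 2 := by
  have hseg : segment ℝ y z ⊆ s := hs.segment_subset hy hz
  have key := (convex_segment y z).norm_image_sub_le_of_norm_fderiv_le' (φ := fderiv ℂ g y)
    (C := K * ‖z - y‖) (fun x hx => hg x (hseg hx)) (fun x hx => ?_)
    (left_mem_segment ℝ y z) (right_mem_segment ℝ y z)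
  · exact key.trans_eq (by ring)
  calc ‖fderiv ℂ g x - fderiv ℂ g y‖ ≤ K * ‖x - y‖ := by
        simpa only [dist_eq_norm] using hK.dist_le_mul x (hseg hx) y hy
    _ ≤ K * ‖z - y‖ := by gcongr; exact norm_sub_le_of_mem_segment hx

theorem exists_norm_sub_sub_fderiv_le_of_forall_norm_le [CompleteSpace F]
    (hg : AnalyticOnNhd ℂ g (ball a R)) (hM : ∀ z ∈ ball a R, ‖g z‖ ≤ M) (hrR : r < R) :
    ∃ K : NNReal, ∀ y ∈ ball a r, ∀ z ∈ ball a r,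
      ‖g z - g y - fderiv ℂ g y (z - y)‖ ≤ K * ‖z - y‖ ^ 2 := by
  obtain ⟨s, hrs, hsR⟩ := exists_between hrR
  have hDs : ∀ y ∈ ball a s, ‖fderiv ℂ g y‖ ≤ 2 * M / (R - s) := fun y hy =>
    norm_fderiv_le_of_forall_norm_le hg.differentiableOn hM hsR hy
  obtain ⟨K, hK⟩ := exists_lipschitzOnWith_of_forall_norm_le
    (hg.fderiv.mono (ball_subset_ball hsR.le)).differentiableOn hDs hrs
  refine ⟨K, fun y hy z hz => norm_sub_sub_fderiv_le (fun x hx => ?_) hK (convex_ball a r) hy hz⟩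
  exact hg.differentiableOn.differentiableAt (isOpen_ball.mem_nhds (ball_subset_ball hrR.le hx))

end Cauchy

theorem norm_sub_sub_sum_le {𝕜 E F : Type*} [RCLike 𝕜] [NormedAddCommGroup E] [NormedSpace 𝕜 E]
    [NormedAddCommGroup F] [NormedSpace 𝕜 F] {g : E → F} {D : E → E →L[𝕜] F} {s : Set E}
    {L : ℝ} (hD : ∀ y ∈ s, ∀ z ∈ s, ‖g z - g y - D y (z - y)‖ ≤ L * ‖z - y‖ ^ 2)
    {x v : E} {m : ℕ} (hm : 0 < m) (hgrid : ∀ i ≤ m, x + ((i : 𝕜) / m) • v ∈ s) :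
    ‖g (x + v) - g x - ∑ i ∈ Finset.range m, D (x + ((i : 𝕜) / m) • v) ((1 / m : 𝕜) • v)‖ ≤
      L * ‖v‖ ^ 2 / m := by
  set y : ℕ → E := fun i => x + ((i : 𝕜) / m) • v
  have hm' : (m : 𝕜) ≠ 0 := Nat.cast_ne_zero.mpr hm.ne'
  have hstep (i : ℕ) : y (i + 1) - y i = (1 / m : 𝕜) • v := by
    rw [add_sub_add_left_eq_sub, ← sub_smul]
    congr 1
    push_cast
    ring
  have hends : g (x + v) - g x = ∑ i ∈ Finset.range m, (g (y (i + 1)) - g (y i)) := by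
    rw [Finset.sum_range_sub (fun i => g (y i))]
    simp [y, hm']
  rw [hends, ← Finset.sum_sub_distrib]
  calc ‖∑ i ∈ Finset.range m, (g (y (i + 1)) - g (y i) - D (y i) ((1 / m : 𝕜) • v))‖
      ≤ ∑ i ∈ Finset.range m, L * ‖(1 / m : 𝕜) • v‖ ^ 2 := by
        refine norm_sum_le_of_le _ fun i hi => ?_
        have hi := Finset.mem_range.mp hi
        have := hD (y i) (hgrid i hi.le) (y (i + 1)) (hgrid (i + 1) hi)
        rwa [hstep] at this
    _ = L * ‖v‖ ^ 2 / m := by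
        rw [Finset.sum_const, Finset.card_range, nsmul_eq_mul, norm_smul, norm_div, norm_one,
          RCLike.norm_natCast]
        field_simp

section Contraction

variable {E : Type*} [NormedAddCommGroup E] [NormedSpace ℂ E] {T : E →L[ℂ] E}

theorem ContinuousLinearMap.mapsTo_ball_of_opNorm_le_one (hT : ‖T‖ ≤ 1) (r : ℝ) :
    MapsTo T (ball 0 r) (ball 0 r) := fun x hx => by
  rw [mem_ball_zero_iff] at hx ⊢
  exact (T.le_of_opNorm_le hT x).trans_lt (by rwa [one_mul])

theorem norm_id_sub_smul_id_sub_le_one (hT : ‖T‖ ≤ 1) {t : ℝ} (ht₀ : 0 ≤ t) (ht₁ : t ≤ 1) :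
    ‖ContinuousLinearMap.id ℂ E - (t : ℂ) • (ContinuousLinearMap.id ℂ E - T)‖ ≤ 1 := by
  have h : ContinuousLinearMap.id ℂ E - (t : ℂ) • (ContinuousLinearMap.id ℂ E - T) =
      ((1 - t : ℝ) : ℂ) • ContinuousLinearMap.id ℂ E + (t : ℂ) • T := by
    push_cast; module
  rw [h]
  refine (norm_add_le _ _).trans ?_
  rw [norm_smul, norm_smul, Complex.norm_real, Complex.norm_real, Real.norm_of_nonneg ht₀,
    Real.norm_of_nonneg (by linarith)]
  nlinarith [ContinuousLinearMap.norm_id_le (𝕜 := ℂ) (E := E)]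

end Contraction

namespace ClusterValue

variable {X : Type*} [NormedAddCommGroup X] [NormedSpace ℂ X]

variable (X) in
def auSubalgebra : Subalgebra ℂ (X → ℂ) where
  carrier := {f | MemAu X f}
  mul_mem' := by
    rintro f g ⟨hfa, ⟨Cf, hCf⟩, hfu⟩ ⟨hga, ⟨Cg, hCg⟩, hgu⟩
    set C := max Cf Cg
    have hfC (x) (hx : x ∈ ball (0 : X) 1) : ‖f x‖ ≤ C := (hCf x hx).trans (le_max_left _ _)
    have hgC (x) (hx : x ∈ ball (0 : X) 1) : ‖g x‖ ≤ C := (hCg x hx).trans (le_max_right _ _)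
    refine ⟨hfa.mul hga, ⟨C * C, fun x hx => ?_⟩, hfu.mul_of_bounded hgu hfC hgC⟩
    exact (norm_mul_le _ _).trans
      (mul_le_mul (hfC x hx) (hgC x hx) (norm_nonneg _) ((norm_nonneg _).trans (hfC x hx)))
  add_mem' := by
    rintro f g ⟨hfa, ⟨Cf, hCf⟩, hfu⟩ ⟨hga, ⟨Cg, hCg⟩, hgu⟩
    refine ⟨hfa.add hga, ⟨Cf + Cg, fun x hx => ?_⟩, hfu.add hgu⟩
    exact (norm_add_le _ _).trans (add_le_add (hCf x hx) (hCg x hx))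
  algebraMap_mem' c :=
    ⟨analyticOn_const, ⟨‖c‖, fun _ _ => le_rfl⟩, uniformContinuous_const.uniformContinuousOn⟩

theorem memAu_clm (φ : X →L[ℂ] ℂ) : MemAu X φ := by
  refine ⟨(φ.analyticOnNhd _).analyticOn, ⟨‖φ‖, fun x hx => ?_⟩,
    φ.uniformContinuous.uniformContinuousOn⟩
  calc ‖φ x‖ ≤ ‖φ‖ * ‖x‖ := φ.le_opNorm x
    _ ≤ ‖φ‖ * 1 := by gcongr; exact (mem_ball_zero_iff.mp hx).le
    _ = ‖φ‖ := mul_one _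

theorem MemAu.comp_clm {f : X → ℂ} (hf : MemAu X f) {A : X →L[ℂ] X} (hA : ‖A‖ ≤ 1) :
    MemAu X (f ∘ A) := by
  have hmaps := A.mapsTo_ball_of_opNorm_le_one hA 1
  obtain ⟨hfa, ⟨C, hC⟩, hfu⟩ := hf
  exact ⟨hfa.comp (A.analyticOnNhd _).analyticOn hmaps, ⟨C, fun x hx => hC _ (hmaps hx)⟩,
    hfu.comp A.uniformContinuous.uniformContinuousOn hmaps⟩

theorem memAu_of_analyticOnNhd {g : X → ℂ} {R M : ℝ} (hR : 1 < R)
    (hg : AnalyticOnNhd ℂ g (ball 0 R)) (hM : ∀ x ∈ ball (0 : X) R, ‖g x‖ ≤ M) : MemAu X g := by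
  obtain ⟨K, hK⟩ := exists_lipschitzOnWith_of_forall_norm_le hg.differentiableOn hM hR
  have hsub : ball (0 : X) 1 ⊆ ball 0 R := ball_subset_ball hR.le
  exact ⟨(hg.mono hsub).analyticOn, ⟨M, fun x hx => hM x (hsub hx)⟩, hK.uniformContinuousOn⟩

theorem memAu_fderiv_apply {g : X → ℂ} {R M : ℝ} (hR : 1 < R)
    (hg : AnalyticOnNhd ℂ g (ball 0 R)) (hM : ∀ x ∈ ball (0 : X) R, ‖g x‖ ≤ M) (v : X) :
    MemAu X (fun y => fderiv ℂ g y v) := by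
  obtain ⟨s, h1s, hsR⟩ := exists_between hR
  refine memAu_of_analyticOnNhd h1s (M := 2 * M / (R - s) * ‖v‖) (fun y hy => ?_) fun y hy => ?_
  · exact ((ContinuousLinearMap.apply ℂ ℂ v).analyticAt _).comp
      (hg.fderiv y (ball_subset_ball hsR.le hy))
  · refine ((fderiv ℂ g y).le_opNorm v).trans ?_
    gcongr
    exact norm_fderiv_le_of_forall_norm_le hg.differentiableOn hM hsR hy

theorem MemAu.exists_norm_comp_smul_sub_le {f : X → ℂ} (hf : MemAu X f) {ε : ℝ} (hε : 0 < ε) :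
    ∃ r : ℝ, 0 < r ∧ r < 1 ∧ ∀ y ∈ ball (0 : X) 1, ‖f ((r : ℂ) • y) - f y‖ ≤ ε := by
  obtain ⟨δ, hδ, hfδ⟩ := Metric.uniformContinuousOn_iff_le.mp hf.2.2 ε hε
  set r := max (1 - δ) (1 / 2)
  have hr₀ : 0 < r := by positivity
  have hr₁ : r < 1 := max_lt (by linarith) (by norm_num)
  refine ⟨r, hr₀, hr₁, fun y hy => ?_⟩
  have hy' := mem_ball_zero_iff.mp hy
  rw [← dist_eq_norm]
  refine hfδ _ ?_ y hy ?_
  · rw [mem_ball_zero_iff, norm_smul, Complex.norm_real, Real.norm_of_nonneg hr₀.le]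
    nlinarith
  · have hsub : (r : ℂ) • y - y = ((r - 1 : ℝ) : ℂ) • y := by push_cast; module
    rw [dist_eq_norm, hsub, norm_smul, Complex.norm_real, Real.norm_of_nonpos (by linarith)]
    nlinarith [le_max_left (1 - δ) (1 / 2), norm_nonneg y]

theorem MemAu.tendsto_limUnder {U : Ultrafilter X} (hU : ball (0 : X) 1 ∈ U) {g : X → ℂ}
    (hg : MemAu X g) : Tendsto g U (𝓝 (limUnder (U : Filter X) g)) := by
  obtain ⟨C, hC⟩ := hg.2.1
  have hK : closedBall (0 : ℂ) C ∈ U.map g := Ultrafilter.mem_map.mpr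
    (mem_of_superset hU fun x hx => mem_closedBall_zero_iff.mpr (hC x hx))
  obtain ⟨w, -, hw⟩ := (isCompact_closedBall (0 : ℂ) C).ultrafilter_le_nhds' _ hK
  exact tendsto_nhds_limUnder ⟨w, hw⟩

theorem FiniteRank.exists_eq_sum_smul {S : X →L[ℂ] X} (hS : FiniteRank X S) :
    ∃ (d : ℕ) (b : Fin d → X) (ψ : Fin d → X →L[ℂ] ℂ), ∀ x, S x = ∑ j, ψ j x • b j := by
  have : FiniteDimensional ℂ (LinearMap.range (S : X →ₗ[ℂ] X)) := hS
  let bs := Module.finBasis ℂ (LinearMap.range (S : X →ₗ[ℂ] X))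
  let Sc := S.codRestrict _ (LinearMap.mem_range_self (S : X →ₗ[ℂ] X))
  refine ⟨_, fun j => bs j, fun j => LinearMap.toContinuousLinearMap (bs.coord j) ∘L Sc,
    fun x => ?_⟩
  rw [show S x = (Sc x : X) from rfl, ← bs.sum_repr (Sc x), Submodule.coe_sum]
  simp

theorem finiteRank_of_forall_eq_sum {E : ℕ → Submodule ℂ X}
    (hEfin : ∀ n, FiniteDimensional ℂ (E n))
    (hrep : ∀ x : X, ∃ a : ℕ → X, (∀ n, a n ∈ E n) ∧
      Tendsto (fun N => ∑ n ∈ Finset.range N, a n) atTop (𝓝 x))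
    {P : X →L[ℂ] X} {N : ℕ} (hP : ∀ (x : X) (a : ℕ → X), (∀ n, a n ∈ E n) →
      Tendsto (fun N => ∑ n ∈ Finset.range N, a n) atTop (𝓝 x) →
      P x = ∑ n ∈ Finset.range N, a n) :
    FiniteRank X P := by
  have : FiniteDimensional ℂ ↥((Finset.range N).sup E) :=
    Submodule.finiteDimensional_finset_sup _ _
  refine Submodule.finiteDimensional_of_le (S₂ := (Finset.range N).sup E)
    (LinearMap.range_le_iff_comap.mpr (Submodule.eq_top_iff'.mpr fun x => ?_))
  obtain ⟨a, ha, hx⟩ := hrep x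
  rw [Submodule.mem_comap, ContinuousLinearMap.coe_coe, hP x a ha hx]
  exact Submodule.sum_mem _ fun n hn => Finset.le_sup (f := E) hn (ha n)

-- The double sum collects the linear terms of the Taylor expansions of `g` between consecutive
-- grid points `x - (i / m) • (x - T x)` of the segment from `x` to `T x`.
theorem norm_comp_sub_sub_sum_le {g : X → ℂ} {K : NNReal}
    (hK : ∀ y ∈ ball (0 : X) 1, ∀ z ∈ ball (0 : X) 1,
      ‖g z - g y - fderiv ℂ g y (z - y)‖ ≤ K * ‖z - y‖ ^ 2)
    {T : X →L[ℂ] X} (hT : ‖T‖ ≤ 1) {d : ℕ} {b : Fin d → X} {ψ : Fin d → X →L[ℂ] ℂ}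
    (hS : ∀ x, x - T x = ∑ j, ψ j x • b j) {m : ℕ} (hm : 0 < m) {x : X}
    (hx : x ∈ ball (0 : X) 1) :
    ‖g (T x) - g x - ∑ i : Fin m, ∑ j, -(1 / m : ℂ) *
      (ψ j x * fderiv ℂ g (x - ((i / m : ℝ) : ℂ) • (x - T x)) (b j))‖ ≤ K * 2 ^ 2 / m := by
  set v := T x - x
  have hpt (i : ℕ) : x + ((i : ℂ) / m) • v = x - ((i / m : ℝ) : ℂ) • (x - T x) := by
    push_cast; module
  have hgrid (i : ℕ) (him : i ≤ m) : x + ((i : ℂ) / m) • v ∈ ball (0 : X) 1 := by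
    have hA := norm_id_sub_smul_id_sub_le_one hT (t := i / m) (by positivity)
      (div_le_one_of_le₀ (by exact_mod_cast him) (by positivity))
    simpa [hpt] using ContinuousLinearMap.mapsTo_ball_of_opNorm_le_one hA 1 hx
  have hv : ‖v‖ ≤ 2 := by
    linarith [norm_sub_le (T x) x, T.le_of_opNorm_le hT x, mem_ball_zero_iff.mp hx]
  have hlin (i : ℕ) : fderiv ℂ g (x + ((i : ℂ) / m) • v) ((1 / m : ℂ) • v) =
      ∑ j, -(1 / m : ℂ) * (ψ j x * fderiv ℂ g (x - ((i / m : ℝ) : ℂ) • (x - T x)) (b j)) := by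
    rw [hpt, show v = -(x - T x) by simp [v], hS]
    simp [Finset.mul_sum]
  have key := norm_sub_sub_sum_le hK hm hgrid
  rw [add_sub_cancel, Finset.sum_range] at key
  simp only [hlin] at key
  exact key.trans (by gcongr)

namespace Character

variable (τ : Character X (MemAu X))

def toAlgHom : auSubalgebra X →ₐ[ℂ] ℂ where
  toFun g := τ.toFun g
  map_one' := τ.map_one'
  map_mul' g h := τ.map_mul' g h g.2 h.2
  map_zero' := by
    have h := τ.map_smul' 0 1 (auSubalgebra X).one_mem
    rwa [zero_smul, zero_mul] at h
  map_add' g h := τ.map_add' g h g.2 h.2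
  commutes' c := by
    change τ.toFun (algebraMap ℂ (X → ℂ) c) = c
    rw [Algebra.algebraMap_eq_smul_one, τ.map_smul' c 1 (auSubalgebra X).one_mem, τ.map_one',
      mul_one]

theorem map_eq_of_forall_approx (g h : auSubalgebra X)
    (H : ∀ ε > 0, ∃ D : auSubalgebra X, τ.toAlgHom D = 0 ∧
      ∀ x ∈ ball (0 : X) 1, ‖(g : X → ℂ) x - (h : X → ℂ) x - (D : X → ℂ) x‖ ≤ ε) :
    τ.toAlgHom g = τ.toAlgHom h := by
  obtain ⟨C, hC⟩ := τ.continuous'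
  refine eq_of_forall_dist_le fun ε hε => ?_
  obtain ⟨D, hD, hgh⟩ := H (ε / (|C| + 1)) (by positivity)
  have hτ : τ.toAlgHom g - τ.toAlgHom h = τ.toAlgHom (g - h - D) := by
    simp only [map_sub, hD, sub_zero]
  rw [dist_eq_norm, hτ]
  calc ‖τ.toAlgHom (g - h - D)‖ ≤ C * (ε / (|C| + 1)) := hC _ _ (g - h - D).2 hgh
    _ ≤ |C| * (ε / (|C| + 1)) := by gcongr; exact le_abs_self C
    _ ≤ ε := by
      rw [mul_div_assoc']
      exact div_le_of_le_mul₀ (by positivity) hε.le (by linarith)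

theorem exists_mem_ball_norm_sub_lt (g : auSubalgebra X) {ε : ℝ} (hε : 0 < ε) :
    ∃ x ∈ ball (0 : X) 1, ‖(g : X → ℂ) x - τ.toAlgHom g‖ < ε := by
  by_contra! hfar
  set g₀ := g - algebraMap ℂ _ (τ.toAlgHom g)
  have hg₀ : ∀ x ∈ ball (0 : X) 1, ε ≤ ‖(g₀ : X → ℂ) x‖ := hfar
  have hne (x) (hx : x ∈ ball (0 : X) 1) : (g₀ : X → ℂ) x ≠ 0 := fun h0 => by
    linarith [hg₀ x hx, norm_eq_zero.mpr h0]
  have hinv : MemAu X (g₀ : X → ℂ)⁻¹ := by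
    obtain ⟨ha, -, hu⟩ := g₀.2
    refine ⟨ha.inv hne, ⟨ε⁻¹, fun x hx => ?_⟩, hu.inv₀ ?_⟩
    · rw [Pi.inv_apply, norm_inv]
      exact inv_anti₀ hε (hg₀ x hx)
    · refine mem_of_superset (ball_mem_nhds 0 hε) ?_
      rintro _ hz ⟨x, hx, rfl⟩
      exact (hg₀ x hx).not_gt (mem_ball_zero_iff.mp hz)
  let u : auSubalgebra X := ⟨_, hinv⟩
  have hone : τ.toAlgHom (g₀ * u) = 1 :=
    (τ.congr' _ 1 (g₀ * u).2 (auSubalgebra X).one_mem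
      fun x hx => mul_inv_cancel₀ (hne x hx)).trans τ.map_one'
  rw [map_mul, map_sub, AlgHom.commutes, Algebra.algebraMap_self_apply, sub_self, zero_mul]
    at hone
  exact zero_ne_one hone

noncomputable def ofUltrafilter (U : Ultrafilter X) (hU : ball (0 : X) 1 ∈ U) :
    Character X (MemAu X) where
  toFun g := limUnder (U : Filter X) g
  congr' g₁ g₂ hg₁ _ h :=
    ((hg₁.tendsto_limUnder hU).congr' (mem_of_superset hU h)).limUnder_eq.symm
  map_add' g₁ g₂ hg₁ hg₂ :=
    ((hg₁.tendsto_limUnder hU).add (hg₂.tendsto_limUnder hU)).limUnder_eq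
  map_mul' g₁ g₂ hg₁ hg₂ :=
    ((hg₁.tendsto_limUnder hU).mul (hg₂.tendsto_limUnder hU)).limUnder_eq
  map_smul' c g hg := ((hg.tendsto_limUnder hU).const_mul c).limUnder_eq
  map_one' := tendsto_const_nhds.limUnder_eq
  continuous' := ⟨1, fun g M hg hM => by
    rw [one_mul]
    exact le_of_tendsto (hg.tendsto_limUnder hU).norm (mem_of_superset hU hM)⟩

variable {τ}

theorem map_comp_eq_of_analyticOnNhd (hτ : τ.inFiberZero) {T : X →L[ℂ] X} (hT : ‖T‖ ≤ 1)
    (hS : FiniteRank X (ContinuousLinearMap.id ℂ X - T)) {g : X → ℂ} {R M : ℝ} (hR : 1 < R)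
    (hg : AnalyticOnNhd ℂ g (ball 0 R)) (hM : ∀ x ∈ ball (0 : X) R, ‖g x‖ ≤ M) :
    τ.toFun (g ∘ T) = τ.toFun g := by
  set S := ContinuousLinearMap.id ℂ X - T
  have hgAu := memAu_of_analyticOnNhd hR hg hM
  obtain ⟨d, b, ψ, hSx⟩ := hS.exists_eq_sum_smul
  obtain ⟨K, hK⟩ := exists_norm_sub_sub_fderiv_le_of_forall_norm_le hg hM hR
  have hA {m : ℕ} (i : Fin m) : ‖ContinuousLinearMap.id ℂ X - ((i / m : ℝ) : ℂ) • S‖ ≤ 1 :=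
    norm_id_sub_smul_id_sub_le_one hT (by positivity)
      (div_le_one_of_le₀ (by exact_mod_cast i.isLt.le) (by positivity))
  let Ψ (j : Fin d) : auSubalgebra X := ⟨ψ j, memAu_clm (ψ j)⟩
  let H (m : ℕ) (i : Fin m) (j : Fin d) : auSubalgebra X :=
    ⟨_, (memAu_fderiv_apply hR hg hM (b j)).comp_clm (hA i)⟩
  let D (m : ℕ) : auSubalgebra X := ∑ i : Fin m, ∑ j, (-(1 / m : ℂ)) • (Ψ j * H m i j)
  have hτD (m : ℕ) : τ.toAlgHom (D m) = 0 := by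
    have hΨ (j : Fin d) : τ.toAlgHom (Ψ j) = 0 := hτ (ψ j)
    simp only [D, map_sum, map_smul, map_mul, hΨ, zero_mul, smul_zero, Finset.sum_const_zero]
  refine τ.map_eq_of_forall_approx ⟨_, hgAu.comp_clm hT⟩ ⟨g, hgAu⟩ fun ε hε => ?_
  obtain ⟨m, hm⟩ := exists_nat_gt (K * 2 ^ 2 / ε)
  have hm₀ : 0 < m := by exact_mod_cast (by positivity : (0 : ℝ) ≤ K * 2 ^ 2 / ε).trans_lt hm
  refine ⟨D m, hτD m, fun x hx => ?_⟩
  have hbound := norm_comp_sub_sub_sum_le hK hT (fun x => hSx x) hm₀ hx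
  refine le_of_eq_of_le ?_ (hbound.trans (div_le_of_le_mul₀ m.cast_nonneg hε.le ?_))
  · simp [D, H, Ψ, S, smul_eq_mul]
  · rw [div_lt_iff₀ hε] at hm
    linarith

theorem map_comp_eq_of_finiteRank (hτ : τ.inFiberZero) {T : X →L[ℂ] X} (hT : ‖T‖ ≤ 1)
    (hS : FiniteRank X (ContinuousLinearMap.id ℂ X - T)) {f : X → ℂ} (hf : MemAu X f) :
    τ.toFun (f ∘ T) = τ.toFun f := by
  refine τ.map_eq_of_forall_approx ⟨_, hf.comp_clm hT⟩ ⟨f, hf⟩ fun ε hε => ?_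
  obtain ⟨r, hr₀, hr₁, hfr⟩ := hf.exists_norm_comp_smul_sub_le (half_pos hε)
  obtain ⟨C, hC⟩ := hf.2.1
  set ρ := (r : ℂ) • ContinuousLinearMap.id ℂ X
  have hρx (x : X) : ‖ρ x‖ = r * ‖x‖ := by simp [ρ, norm_smul, abs_of_pos hr₀]
  have hρ : ‖ρ‖ ≤ 1 := ρ.opNorm_le_bound zero_le_one fun x => by
    rw [hρx]
    gcongr
  have hmaps : MapsTo ρ (ball 0 r⁻¹) (ball (0 : X) 1) := fun x hx => by
    rw [mem_ball_zero_iff, hρx, ← mul_inv_cancel₀ hr₀.ne']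
    exact mul_lt_mul_of_pos_left (mem_ball_zero_iff.mp hx) hr₀
  have hfρ : AnalyticOnNhd ℂ (f ∘ ρ) (ball 0 r⁻¹) :=
    (isOpen_ball.analyticOn_iff_analyticOnNhd.mp hf.1).comp (ρ.analyticOnNhd _) hmaps
  have hτρ : τ.toFun (f ∘ ρ ∘ T) = τ.toFun (f ∘ ρ) :=
    map_comp_eq_of_analyticOnNhd hτ hT hS ((one_lt_inv₀ hr₀).mpr hr₁) hfρ
      fun x hx => hC _ (hmaps hx)
  have hfρAu := hf.comp_clm hρ
  refine ⟨⟨_, hfρAu.comp_clm hT⟩ - ⟨_, hfρAu⟩, by rw [map_sub, sub_eq_zero]; exact hτρ,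
    fun x hx => ?_⟩
  have hTx := T.mapsTo_ball_of_opNorm_le_one hT 1 hx
  calc ‖f (T x) - f x - (f (ρ (T x)) - f (ρ x))‖
      = ‖(f (ρ x) - f x) - (f (ρ (T x)) - f (T x))‖ := by ring_nf
    _ ≤ ε / 2 + ε / 2 := (norm_sub_le _ _).trans (add_le_add (hfr x hx) (hfr _ hTx))
    _ = ε := add_halves ε

end Character

theorem exists_character_of_mem_clusterSetZero {f : X → ℂ} {z : ℂ}
    (hz : z ∈ clusterSetZero X f) :
    ∃ τ : Character X (MemAu X), τ.inFiberZero ∧ τ.toFun f = z := by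
  obtain ⟨l, hl, hlB, hlφ, hlf⟩ := hz
  have hUl : ↑(Ultrafilter.of l) ≤ l := Ultrafilter.of_le l
  exact ⟨.ofUltrafilter _ (le_principal_iff.mp (hUl.trans hlB)),
    fun φ => ((hlφ φ).mono_left hUl).limUnder_eq, (hlf.mono_left hUl).limUnder_eq⟩

theorem mem_clusterSetZero_of_forall {f : X → ℂ} {z : ℂ}
    (h : ∀ ε > 0, ∀ F : Finset (X →L[ℂ] ℂ),
      ∃ x ∈ ball (0 : X) 1, ‖f x - z‖ < ε ∧ ∀ φ ∈ F, ‖φ x‖ < ε) :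
    z ∈ clusterSetZero X f := by
  classical
  choose x hxB hxf hxφ using fun p : ℕ × Finset (X →L[ℂ] ℂ) =>
    h (1 / (p.1 + 1)) Nat.one_div_pos_of_nat p.2
  have hsmall {ε : ℝ} (hε : 0 < ε) : ∃ n : ℕ, ∀ m ≥ n, 1 / ((m : ℝ) + 1) < ε := by
    obtain ⟨n, hn⟩ := exists_nat_one_div_lt hε
    exact ⟨n, fun m hm => (Nat.one_div_le_one_div hm).trans_lt hn⟩
  refine ⟨map x atTop, inferInstance, le_principal_iff.mpr (mem_map.mpr (univ_mem' hxB)),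
    fun φ => ?_, ?_⟩
  · refine tendsto_map'_iff.mpr (Metric.tendsto_atTop.mpr fun ε hε => ?_)
    obtain ⟨n, hn⟩ := hsmall hε
    refine ⟨(n, {φ}), fun p hp => ?_⟩
    rw [dist_zero_right]
    exact (hxφ p φ (Finset.singleton_subset_iff.mp hp.2)).trans (hn p.1 hp.1)
  · refine tendsto_map'_iff.mpr (Metric.tendsto_atTop.mpr fun ε hε => ?_)
    obtain ⟨n, hn⟩ := hsmall hε
    refine ⟨(n, ∅), fun p hp => ?_⟩
    rw [dist_eq_norm]
    exact (hxf p).trans (hn p.1 hp.1)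

theorem Character.map_mem_clusterSetZero {τ : Character X (MemAu X)} (hτ : τ.inFiberZero)
    {ι : Type*} {l : Filter ι} [l.NeBot] {T : ι → X →L[ℂ] X} (hT : ∀ i, ‖T i‖ ≤ 1)
    (hS : ∀ i, FiniteRank X (ContinuousLinearMap.id ℂ X - T i))
    (hshrink : ∀ φ : X →L[ℂ] ℂ, Tendsto (fun i => ‖φ.comp (T i)‖) l (𝓝 0))
    {f : X → ℂ} (hf : MemAu X f) : τ.toFun f ∈ clusterSetZero X f := by
  refine mem_clusterSetZero_of_forall fun ε hε F => ?_
  obtain ⟨i, hi⟩ := ((Finset.eventually_all F).mpr fun φ _ =>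
    (hshrink φ).eventually (gt_mem_nhds hε)).exists
  obtain ⟨y, hy, hfy⟩ := τ.exists_mem_ball_norm_sub_lt ⟨_, hf.comp_clm (hT i)⟩ hε
  refine ⟨T i y, (T i).mapsTo_ball_of_opNorm_le_one (hT i) 1 hy,
    by rw [← map_comp_eq_of_finiteRank hτ (hT i) (hS i) hf]; exact hfy, fun φ hφ => ?_⟩
  calc ‖φ (T i y)‖ = ‖φ.comp (T i) y‖ := rfl
    _ ≤ ‖φ.comp (T i)‖ * ‖y‖ := ContinuousLinearMap.le_opNorm _ _
    _ < ε := by nlinarith [hi φ hφ, norm_nonneg y, mem_ball_zero_iff.mp hy]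

end ClusterValue

open Metric Filter Topology ClusterValue in
/-- If `X` has a shrinking reverse monotone finite dimensional decomposition (a shrinking FDD
whose canonical partial sum projections `P n` satisfy `‖I - P n‖ = 1`), then the cluster value
theorem holds for `A_u(B)` at `0`. -/
theorem statement3 {X : Type*} [NormedAddCommGroup X] [NormedSpace ℂ X]
    (E : ℕ → Submodule ℂ X) (hEfin : ∀ n, FiniteDimensional ℂ ↥(E n))
    -- every `x : X` has a unique representation `x = ∑ n, a n` with `a n ∈ E n`
    (hrep : ∀ x : X, ∃! a : ℕ → X, (∀ n, a n ∈ E n) ∧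
      Tendsto (fun N => ∑ n ∈ Finset.range N, a n) atTop (𝓝 x))
    -- the canonical partial sum projections
    (P : ℕ → X →L[ℂ] X)
    (hP : ∀ (x : X) (a : ℕ → X), (∀ n, a n ∈ E n) →
      Tendsto (fun N => ∑ n ∈ Finset.range N, a n) atTop (𝓝 x) →
      ∀ N, P N x = ∑ n ∈ Finset.range N, a n)
    -- the FDD is shrinking: the adjoints `(P N)*` converge strongly to the identity on `X*`
    (hshrink : ∀ φ : X →L[ℂ] ℂ, Tendsto (fun N => ‖φ.comp (P N) - φ‖) atTop (𝓝 0))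
    -- the FDD is reverse monotone: `‖I - P N‖ = 1`
    (hrevmono : ∀ N, ‖ContinuousLinearMap.id ℂ X - P N‖ = 1) :
    ∀ f : X → ℂ, MemAu X f →
      clusterSetZero X f =
        {z | ∃ τ : Character X (MemAu X), τ.inFiberZero ∧ τ.toFun f = z} := by
  intro f hf
  ext z
  refine ⟨exists_character_of_mem_clusterSetZero, ?_⟩
  rintro ⟨τ, hτ, rfl⟩
  refine Character.map_mem_clusterSetZero hτ (l := atTop)
    (T := fun N => ContinuousLinearMap.id ℂ X - P N) (fun N => (hrevmono N).le) (fun N => ?_)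
    (fun φ => ?_) hf
  · rw [sub_sub_cancel]
    exact finiteRank_of_forall_eq_sum hEfin (fun x => (hrep x).exists) fun x a ha hx =>
      hP x a ha hx N
  · have hφ (N : ℕ) : ‖φ.comp (ContinuousLinearMap.id ℂ X - P N)‖ = ‖φ.comp (P N) - φ‖ := by
      rw [ContinuousLinearMap.comp_sub, ContinuousLinearMap.comp_id, norm_sub_rev]
    simpa only [hφ] using hshrink φ
end

section
/- For every complex Banach space X with open unit ball B and every f ∈ A_u(B), the cluster set of f at 0 equals the intersection, over all closed finite-codimensional subspaces Y of X, of the images of the fibers at 0 under the Gelfand transform of the restriction: Cl_B(f, 0) = ⋂_{Y ⊆ X, dim(X/Y) < ∞} (f|_{B_Y})^(M₀(B_Y)). -/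
open Metric Filter Topology

/-!
A weakly null net in `B` along which `f → z` can be moved into `B_Y` for any closed
finite-codimensional `Y`: the quotient map `X → X ⧸ Y` has finite-dimensional range, so it sends
weakly null nets to norm-null ones, and a continuous linear section of it yields points of `Y` at
vanishing distance from the net, which are then rescaled into `B_Y`. Uniform continuity of `f`
keeps the limit `z`, and evaluation at the limit along an ultrafilter refining this net is a
character of `A_u(B_Y)` in the fiber over `0` with value `z` at `f|_{B_Y}`.

Conversely, a character `τ` of `A_u(B_Y)` takes at `g` a value in the closure of `g(B_Y)`, as
otherwise `g - τ g` would be invertible in `A_u(B_Y)`. Taking for `Y` the common kernel of finitely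
many functionals gives points of `B` annihilated by them at which `f` is close to `z`; indexed by
these finite sets and the precision, they form a weakly null net along which `f → z`.
-/

open scoped Uniformity

section UniformContinuousOn

variable {α : Type*} [UniformSpace α] {s : Set α}

theorem uniformContinuousOn_iff_tendsto_sub {G : Type*} [UniformSpace G] [AddGroup G]
    [IsUniformAddGroup G] {f : α → G} :
    UniformContinuousOn f s ↔
      Tendsto (fun p : α × α => f p.2 - f p.1) (𝓤 α ⊓ 𝓟 (s ×ˢ s)) (𝓝 0) := by
  rw [UniformContinuousOn, uniformity_eq_comap_nhds_zero G, tendsto_comap_iff, Function.comp_def]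

theorem eventually_mem_of_uniformity_inf_principal :
    ∀ᶠ p in 𝓤 α ⊓ 𝓟 (s ×ˢ s), p.1 ∈ s ∧ p.2 ∈ s :=
  (eventually_principal.2 fun _ hp => Set.mem_prod.1 hp).filter_mono inf_le_right

theorem UniformContinuousOn.mul_of_isBounded {R : Type*} [NormedRing R] {f g : α → R}
    (hf : UniformContinuousOn f s) (hg : UniformContinuousOn g s) {Cf Cg : ℝ}
    (hCf : ∀ x ∈ s, ‖f x‖ ≤ Cf) (hCg : ∀ x ∈ s, ‖g x‖ ≤ Cg) :
    UniformContinuousOn (f * g) s := by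
  rw [uniformContinuousOn_iff_tendsto_sub] at hf hg ⊢
  have hs := eventually_mem_of_uniformity_inf_principal (s := s)
  have h₁ := hf.zero_mul_isBoundedUnder_le (g := fun p => g p.2)
    (isBoundedUnder_of_eventually_le (hs.mono fun p hp => hCg p.2 hp.2))
  have h₂ := isBoundedUnder_le_mul_tendsto_zero (f := fun p => f p.1)
    (isBoundedUnder_of_eventually_le (hs.mono fun p hp => hCf p.1 hp.1)) hg
  simpa [sub_mul, mul_sub] using h₁.add h₂

theorem UniformContinuousOn.inv_of_le_norm {K : Type*} [NormedDivisionRing K] {f : α → K}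
    (hf : UniformContinuousOn f s) {δ : ℝ} (hδ : 0 < δ) (hlow : ∀ x ∈ s, δ ≤ ‖f x‖) :
    UniformContinuousOn (fun x => (f x)⁻¹) s := by
  rw [uniformContinuousOn_iff_tendsto_sub] at hf ⊢
  have hs := eventually_mem_of_uniformity_inf_principal (s := s)
  have hinv : ∀ x ∈ s, ‖(f x)⁻¹‖ ≤ δ⁻¹ := fun x hx => by
    rw [norm_inv]; exact inv_anti₀ hδ (hlow x hx)
  have hne : ∀ x ∈ s, f x ≠ 0 := fun x hx => norm_pos_iff.1 (hδ.trans_le (hlow x hx))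
  have h := isBoundedUnder_le_mul_tendsto_zero (f := fun p => (f p.2)⁻¹)
    (isBoundedUnder_of_eventually_le (hs.mono fun p hp => hinv p.2 hp.2))
    (hf.zero_mul_isBoundedUnder_le (g := fun p => (f p.1)⁻¹)
      (isBoundedUnder_of_eventually_le (hs.mono fun p hp => hinv p.1 hp.1)))
  refine (neg_zero (G := K) ▸ h.neg).congr' (hs.mono fun p hp => ?_)
  simp only [inv_sub_inv' (hne _ hp.2) (hne _ hp.1)]
  noncomm_ring

end UniformContinuousOn

theorem UniformContinuousOn.tendsto_comp_of_tendsto_dist {α β ι : Type*} [PseudoMetricSpace α]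
    [UniformSpace β] {s : Set α} {f : α → β} (hf : UniformContinuousOn f s) {u v : ι → α}
    {l : Filter ι} (hu : ∀ᶠ i in l, u i ∈ s) (hv : ∀ᶠ i in l, v i ∈ s)
    (huv : Tendsto (fun i => dist (u i) (v i)) l (𝓝 0)) {b : β} (h : Tendsto (f ∘ u) l (𝓝 b)) :
    Tendsto (f ∘ v) l (𝓝 b) :=
  h.congr_uniformity <| Tendsto.comp hf <| tendsto_inf.2
    ⟨tendsto_uniformity_iff_dist_tendsto_zero.2 huv,
      tendsto_principal.2 ((hu.and hv).mono fun _ hi => Set.mk_mem_prod hi.1 hi.2)⟩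

theorem Ultrafilter.tendsto_limUnder_of_eventually_norm_le {α E : Type*}
    [NormedAddCommGroup E] [ProperSpace E] (u : Ultrafilter α) {h : α → E} {M : ℝ}
    (hM : ∀ᶠ a in u, ‖h a‖ ≤ M) : Tendsto h u (𝓝 (limUnder u h)) := by
  obtain ⟨w, -, hw⟩ := (isCompact_closedBall (0 : E) M).ultrafilter_le_nhds (u.map h)
    (le_principal_iff.2 (hM.mono fun _ ha => mem_closedBall_zero_iff.2 ha))
  exact tendsto_nhds_limUnder ⟨w, hw⟩

section WeaklyNull

variable {𝕜 X : Type*} [NontriviallyNormedField 𝕜] [CompleteSpace 𝕜]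
  [NormedAddCommGroup X] [NormedSpace 𝕜 X] {l : Filter X}

theorem ContinuousLinearMap.tendsto_zero_of_forall_dual {E : Type*} [NormedAddCommGroup E]
    [NormedSpace 𝕜 E] [FiniteDimensional 𝕜 E] (T : X →L[𝕜] E)
    (hl : ∀ φ : X →L[𝕜] 𝕜, Tendsto φ l (𝓝 0)) : Tendsto T l (𝓝 0) := by
  let e := (Module.finBasis 𝕜 E).equivFunL
  have hcoord : Tendsto (e ∘ T) l (𝓝 0) :=
    tendsto_pi_nhds.2 fun i =>
      hl ((ContinuousLinearMap.proj i).comp (e.toContinuousLinearMap.comp T))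
  simpa [Function.comp_def] using (e.symm.continuous.tendsto 0).comp hcoord

theorem Submodule.exists_tendsto_sub_of_forall_dual (Y : Submodule 𝕜 X)
    (hY : IsClosed (Y : Set X)) [FiniteDimensional 𝕜 (X ⧸ Y)]
    (hl : ∀ φ : X →L[𝕜] 𝕜, Tendsto φ l (𝓝 0)) :
    ∃ π : X →L[𝕜] Y, Tendsto (fun x => x - π x) l (𝓝 0) := by
  have := hY
  obtain ⟨σ, hσ⟩ := Y.mkQL.exists_rightInverse_of_surjective (by simp)
  have hmem : ∀ x, x - σ (Y.mkQL x) ∈ Y := fun x => by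
    have hx := ContinuousLinearMap.ext_iff.1 hσ (Y.mkQL x)
    simp only [ContinuousLinearMap.comp_apply, ContinuousLinearMap.id_apply, Y.mkQL_apply] at hx
    rw [← Submodule.Quotient.mk_eq_zero, Submodule.Quotient.mk_sub]
    exact sub_eq_zero.2 hx.symm
  refine ⟨(ContinuousLinearMap.id 𝕜 X - σ.comp Y.mkQL).codRestrict Y hmem, ?_⟩
  have hσ0 := (σ.continuous.tendsto 0).comp (Y.mkQL.tendsto_zero_of_forall_dual hl)
  rw [map_zero] at hσ0
  exact hσ0.congr fun x => (sub_sub_cancel x _).symm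

end WeaklyNull

section Rescale

variable {E : Type*} [SeminormedAddCommGroup E] [NormedSpace ℝ E]

theorem norm_inv_one_add_norm_sub_smul_lt_one {x y : E} (hx : ‖x‖ < 1) :
    ‖(1 + ‖x - y‖)⁻¹ • y‖ < 1 := by
  have hpos : 0 < 1 + ‖x - y‖ := by positivity
  rw [norm_smul, Real.norm_of_nonneg (inv_nonneg.2 hpos.le), inv_mul_lt_iff₀ hpos, mul_one]
  calc ‖y‖ ≤ ‖x‖ + ‖x - y‖ := by simpa using norm_sub_le x (x - y)
    _ < 1 + ‖x - y‖ := by linarith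

theorem norm_inv_one_add_norm_sub_smul_sub_le {x y : E} (hx : ‖x‖ ≤ 1) :
    ‖(1 + ‖x - y‖)⁻¹ • y - x‖ ≤ 2 * ‖x - y‖ := by
  set d := ‖x - y‖
  have hc : 0 < 1 + d := by positivity
  have key : (1 + d)⁻¹ • y - x = (1 + d)⁻¹ • (y - x) - (d * (1 + d)⁻¹) • x := by
    have h1 : (1 + d)⁻¹ + d * (1 + d)⁻¹ = 1 := by field_simp
    linear_combination (norm := module) h1 • x
  have hc1 : (1 + d)⁻¹ ≤ 1 := inv_le_one_of_one_le₀ (by linarith [norm_nonneg (x - y)])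
  rw [key]
  calc ‖(1 + d)⁻¹ • (y - x) - (d * (1 + d)⁻¹) • x‖
      ≤ (1 + d)⁻¹ * d + d * (1 + d)⁻¹ * ‖x‖ := by
        refine (norm_sub_le _ _).trans (add_le_add ?_ ?_) <;>
          simp [norm_smul, norm_sub_rev, abs_of_pos hc, d]
    _ ≤ 1 * d + d * 1 * 1 := by gcongr
    _ = 2 * d := by ring

end Rescale

namespace ClusterValue

section Algebra

variable {X : Type*} [NormedAddCommGroup X] [NormedSpace ℂ X] {f g : X → ℂ}

theorem MemAu.const (c : ℂ) : MemAu X (fun _ => c) :=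
  ⟨analyticOn_const, ⟨‖c‖, fun _ _ => le_rfl⟩, uniformContinuous_const.uniformContinuousOn⟩

theorem MemAu.sub_const (hf : MemAu X f) (c : ℂ) : MemAu X (fun x => f x - c) := by
  obtain ⟨hfa, ⟨C, hC⟩, hfu⟩ := hf
  refine ⟨hfa.sub analyticOn_const, ⟨C + ‖c‖, fun x hx => ?_⟩, ?_⟩
  · exact (norm_sub_le _ _).trans (by linarith [hC x hx])
  · rw [uniformContinuousOn_iff_tendsto_sub] at hfu ⊢
    simpa using hfu

theorem MemAu.mul (hf : MemAu X f) (hg : MemAu X g) : MemAu X (f * g) := by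
  obtain ⟨hfa, ⟨Cf, hCf⟩, hfu⟩ := hf
  obtain ⟨hga, ⟨Cg, hCg⟩, hgu⟩ := hg
  refine ⟨hfa.mul hga, ⟨Cf * Cg, fun x hx => ?_⟩, hfu.mul_of_isBounded hgu hCf hCg⟩
  rw [Pi.mul_apply, norm_mul]
  exact mul_le_mul (hCf x hx) (hCg x hx) (norm_nonneg _) ((norm_nonneg _).trans (hCf x hx))

theorem MemAu.inv (hf : MemAu X f) {δ : ℝ} (hδ : 0 < δ)
    (hlow : ∀ x ∈ ball (0 : X) 1, δ ≤ ‖f x‖) : MemAu X (fun x => (f x)⁻¹) := by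
  obtain ⟨hfa, -, hfu⟩ := hf
  refine ⟨hfa.inv fun x hx => norm_pos_iff.1 (hδ.trans_le (hlow x hx)),
    ⟨δ⁻¹, fun x hx => ?_⟩, hfu.inv_of_le_norm hδ hlow⟩
  rw [norm_inv]
  exact inv_anti₀ hδ (hlow x hx)

theorem MemAu.comp_subtype (Y : Submodule ℂ X) (hf : MemAu X f) : MemAu Y (fun y => f y) := by
  obtain ⟨hfa, ⟨C, hC⟩, hfu⟩ := hf
  have hmaps : Set.MapsTo ((↑) : Y → X) (ball 0 1) (ball 0 1) := fun y hy => by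
    simpa using hy
  exact ⟨hfa.comp (Y.subtypeL.analyticOnNhd _).analyticOn hmaps,
    ⟨C, fun y hy => hC _ (hmaps hy)⟩,
    hfu.comp (Y.subtypeL.uniformContinuous.uniformContinuousOn) hmaps⟩

theorem Character.apply_const (τ : Character X (MemAu X)) (c : ℂ) :
    τ.toFun (fun _ => c) = c := by
  rw [show (fun _ : X => c) = c • (1 : X → ℂ) by funext; simp,
    τ.map_smul' c 1 (MemAu.const 1), τ.map_one', mul_one]

theorem Character.apply_sub_const (τ : Character X (MemAu X)) (hg : MemAu X g) (c : ℂ) :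
    τ.toFun (fun x => g x - c) = τ.toFun g - c := by
  rw [show (fun x => g x - c) = g + fun _ => -c by funext; simp [sub_eq_add_neg],
    τ.map_add' _ _ hg (MemAu.const _), τ.apply_const, sub_eq_add_neg]

theorem Character.apply_mem_closure_image (τ : Character X (MemAu X)) (hg : MemAu X g) :
    τ.toFun g ∈ closure (g '' ball 0 1) := by
  by_contra hcl
  obtain ⟨ε, hε, hfar⟩ : ∃ ε > 0, ∀ x ∈ ball (0 : X) 1, ε ≤ ‖g x - τ.toFun g‖ := by
    rw [Metric.mem_closure_iff] at hcl
    push Not at hcl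
    obtain ⟨ε, hε, h⟩ := hcl
    exact ⟨ε, hε, fun x hx => by simpa [dist_eq_norm'] using h (g x) ⟨x, hx, rfl⟩⟩
  have hsub := hg.sub_const (τ.toFun g)
  have hinv := hsub.inv hε hfar
  have hone : τ.toFun ((fun x => (g x - τ.toFun g)⁻¹) * fun x => g x - τ.toFun g) = 1 := by
    rw [τ.congr' _ 1 (hinv.mul hsub) (MemAu.const 1), τ.map_one']
    intro x hx
    exact inv_mul_cancel₀ (norm_pos_iff.1 (hε.trans_le (hfar x hx)))
  rw [τ.map_mul' _ _ hinv hsub, τ.apply_sub_const hg, sub_self, mul_zero] at hone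
  exact zero_ne_one hone

end Algebra

section OfUltrafilter

variable {Y α : Type*} [NormedAddCommGroup Y] {Mem : (Y → ℂ) → Prop}
  (hMem : ∀ g, Mem g → ∃ C : ℝ, ∀ y ∈ ball (0 : Y) 1, ‖g y‖ ≤ C)
  (u : Ultrafilter α) {Φ : α → Y} (hΦ : ∀ᶠ a in u, Φ a ∈ ball (0 : Y) 1)

noncomputable def Character.ofUltrafilter_s5 : Character Y Mem :=
  have hlim : ∀ g, Mem g → Tendsto (g ∘ Φ) u (𝓝 (limUnder u (g ∘ Φ))) := fun g hg =>
    let ⟨_, hC⟩ := hMem g hg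
    u.tendsto_limUnder_of_eventually_norm_le (hΦ.mono fun _ ha => hC _ ha)
  { toFun g := limUnder u (g ∘ Φ)
    congr' g g' hg _ hgg' := ((hlim _ hg).congr'
      (hΦ.mono fun a ha => hgg' _ ha)).limUnder_eq.symm
    map_add' g g' hg hg' :=
      ((hlim _ hg).add (hlim _ hg')).limUnder_eq
    map_mul' g g' hg hg' :=
      ((hlim _ hg).mul (hlim _ hg')).limUnder_eq
    map_smul' c g hg := ((hlim _ hg).const_mul c).limUnder_eq
    map_one' := tendsto_const_nhds.limUnder_eq
    continuous' := ⟨1, fun g M hg hM => by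
      rw [one_mul]
      exact le_of_tendsto (hlim _ hg).norm
        (hΦ.mono fun a ha => hM _ ha)⟩ }

theorem Character.ofUltrafilter_apply {g : Y → ℂ} {w : ℂ} (hg : Tendsto (g ∘ Φ) u (𝓝 w)) :
    (Character.ofUltrafilter_s5 hMem u hΦ).toFun g = w :=
  hg.limUnder_eq

end OfUltrafilter

section ClusterSet

variable {X : Type*} [NormedAddCommGroup X] [NormedSpace ℂ X] {f : X → ℂ} {z : ℂ}
  {l : Filter X}

theorem exists_mapsTo_ball_tendsto_sub (Y : Submodule ℂ X) (hY : IsClosed (Y : Set X))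
    [FiniteDimensional ℂ (X ⧸ Y)] (hball : l ≤ 𝓟 (ball 0 1))
    (hl : ∀ φ : X →L[ℂ] ℂ, Tendsto φ l (𝓝 0)) :
    ∃ Φ : X → Y, Set.MapsTo Φ (ball 0 1) (ball 0 1) ∧
      Tendsto (fun x => dist x (Φ x : X)) l (𝓝 0) ∧ ∀ ψ : Y →L[ℂ] ℂ, Tendsto (ψ ∘ Φ) l (𝓝 0) := by
  obtain ⟨π, hπ⟩ := Y.exists_tendsto_sub_of_forall_dual hY hl
  set c : X → ℝ := fun x => (1 + ‖x - π x‖)⁻¹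
  have hc : ∀ x, ‖c x‖ ≤ 1 := fun x => by
    rw [Real.norm_of_nonneg (by positivity)]
    exact inv_le_one_of_one_le₀ (by linarith [norm_nonneg (x - π x)])
  refine ⟨fun x => c x • π x, fun x hx => ?_, ?_, fun ψ => ?_⟩
  · rw [mem_ball_zero_iff] at hx ⊢
    simpa [c] using norm_inv_one_add_norm_sub_smul_lt_one (y := (π x : X)) hx
  · refine squeeze_zero' (.of_forall fun _ => dist_nonneg)
      (Eventually.mono (le_principal_iff.1 hball) fun x hx => ?_)
      (by simpa using hπ.norm.const_mul 2)
    simpa [c, dist_eq_norm'] using norm_inv_one_add_norm_sub_smul_sub_le (y := (π x : X))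
      (mem_ball_zero_iff.1 hx).le
  · have := (isBoundedUnder_of_eventually_le (f := l) (u := fun x => ‖c x‖)
      (.of_forall hc)).smul_tendsto_zero (hl (ψ.comp π))
    simpa [Function.comp_def] using this

theorem exists_character_inFiberZero_of_mem_clusterSetZero (hf : MemAu X f)
    (hz : z ∈ clusterSetZero X f) (Y : Submodule ℂ X) (hY : IsClosed (Y : Set X))
    [FiniteDimensional ℂ (X ⧸ Y)] :
    ∃ τ : Character Y (MemAu Y), τ.inFiberZero ∧ τ.toFun (fun y => f y) = z := by
  obtain ⟨l, hne, hball, hl, hfz⟩ := hz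
  obtain ⟨Φ, hΦball, hΦdist, hΦweak⟩ := exists_mapsTo_ball_tendsto_sub Y hY hball hl
  have hlball : ∀ᶠ x in l, x ∈ ball (0 : X) 1 := le_principal_iff.1 hball
  obtain ⟨u, hu⟩ := exists_ultrafilter_le l
  refine ⟨Character.ofUltrafilter_s5 (fun g hg => hg.2.1) u (hu (hlball.mono hΦball)),
    fun ψ => Character.ofUltrafilter_apply _ _ _ ((hΦweak ψ).mono_left hu),
    Character.ofUltrafilter_apply _ _ _ (Tendsto.mono_left ?_ hu)⟩
  have hΦX : ∀ᶠ x in l, (Φ x : X) ∈ ball (0 : X) 1 := hlball.mono fun x hx => by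
    simpa using hΦball hx
  exact hf.2.2.tendsto_comp_of_tendsto_dist (u := id) hlball hΦX hΦdist hfz

theorem exists_mem_ball_forall_eq_zero_dist_lt (hf : MemAu X f)
    (hz : ∀ Y : Submodule ℂ X, IsClosed (Y : Set X) → FiniteDimensional ℂ (X ⧸ Y) →
      ∃ τ : Character Y (MemAu Y), τ.toFun (fun y => f y) = z)
    (F : Finset (X →L[ℂ] ℂ)) {ε : ℝ} (hε : 0 < ε) :
    ∃ x ∈ ball (0 : X) 1, (∀ φ ∈ F, φ x = 0) ∧ dist (f x) z < ε := by
  let T : X →L[ℂ] (F → ℂ) := ContinuousLinearMap.pi fun φ => (φ : X →L[ℂ] ℂ)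
  obtain ⟨τ, hτ⟩ :=
    hz T.ker T.isClosed_ker T.toLinearMap.quotKerEquivRange.symm.finiteDimensional
  have hcl := hτ ▸ τ.apply_mem_closure_image (hf.comp_subtype T.ker)
  obtain ⟨-, ⟨y, hy, rfl⟩, hyz⟩ := Metric.mem_closure_iff.1 hcl ε hε
  refine ⟨y, by simpa using hy, fun φ hφ => congrFun (LinearMap.mem_ker.1 y.2) ⟨φ, hφ⟩, ?_⟩
  rwa [dist_comm]

theorem mem_clusterSetZero_of_forall_exists
    (h : ∀ (F : Finset (X →L[ℂ] ℂ)) (ε : ℝ), 0 < ε →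
      ∃ x ∈ ball (0 : X) 1, (∀ φ ∈ F, φ x = 0) ∧ dist (f x) z < ε) :
    z ∈ clusterSetZero X f := by
  classical
  choose x hxball hx0 hxz using fun p : Finset (X →L[ℂ] ℂ) × ℕ =>
    h p.1 (1 / (p.2 + 1)) Nat.one_div_pos_of_nat
  refine ⟨map x atTop, inferInstance, ?_, fun φ => ?_, ?_⟩
  · exact le_principal_iff.2 (mem_map.2 (Eventually.of_forall hxball))
  · refine tendsto_map'_iff.2 (tendsto_const_nhds.congr' ?_)
    filter_upwards [eventually_ge_atTop ({φ}, 0)] with p hp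
    exact (hx0 p φ (Finset.singleton_subset_iff.1 hp.1)).symm
  · refine tendsto_map'_iff.2 (tendsto_iff_dist_tendsto_zero.2 (squeeze_zero
      (fun _ => dist_nonneg) (fun p => (hxz p).le) ?_))
    exact tendsto_one_div_add_atTop_nhds_zero_nat.comp
      (monotone_snd.tendsto_atTop_atTop fun n => ⟨(∅, n), le_rfl⟩)

end ClusterSet

end ClusterValue

open Metric Filter Topology ClusterValue in
/-- For every Banach space `X` and `f ∈ A_u(B)`, the cluster set of `f` at `0` equals the
intersection over all closed finite-codimensional subspaces `Y ⊆ X` of the images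
`(f|_{B_Y})^(M₀(B_Y))` of the fibers at `0` under the Gelfand transform of the restriction. -/
theorem statement5 {X : Type*} [NormedAddCommGroup X] [NormedSpace ℂ X]
    (f : X → ℂ) (hf : MemAu X f) :
    clusterSetZero X f =
      ⋂ (Y : Submodule ℂ X) (_ : IsClosed (Y : Set X)) (_ : FiniteDimensional ℂ (X ⧸ Y)),
        {z | ∃ τ : Character ↥Y (MemAu ↥Y), τ.inFiberZero ∧ τ.toFun (fun y => f ↑y) = z} := by
  ext z
  simp only [Set.mem_iInter, Set.mem_ofPred_eq]
  refine ⟨fun hz Y hY _ => exists_character_inFiberZero_of_mem_clusterSetZero hf hz Y hY,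
    fun hz => mem_clusterSetZero_of_forall_exists fun F ε hε => ?_⟩
  refine exists_mem_ball_forall_eq_zero_dist_lt hf (fun Y hY _ => ?_) F hε
  obtain ⟨τ, -, hτ⟩ := hz Y hY ‹_›
  exact ⟨τ, hτ⟩
end

section
/- Let X and Y be complex Banach spaces that are isomorphic as Banach spaces (there is a bounded linear bijection T : Y → X with bounded inverse). If every element of A_u(B_X) is a uniform limit on B_X of finite type polynomials on X (i.e. A_u(B_X) = A(B_X)), then every element of A_u(B_Y) is a uniform limit on B_Y of finite type polynomials on Y (i.e. A_u(B_Y) = A(B_Y)). -/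
open Metric Filter Topology

/-!
Put `a = ‖T⁻¹‖ + 1`. The operator `a⁻¹ T⁻¹` has norm `≤ 1`, so `g ∘ a⁻¹ T⁻¹` lies in
`A_u(B_X) = A(B_X)`; composing its finite type approximants with `a T` approximates `g` uniformly,
but only on the small ball `ρ B_Y`, `ρ = (a ‖T‖ + 1)⁻¹`.

Such a local approximation propagates to all of `B_Y` by homogeneous expansion. Fix `y ∈ B_Y` and
look at the ray `t ↦ g (t • y)`. Cauchy estimates on `|t| = ρ` put its Taylor coefficients at `0`
within `ε ρ⁻ᵏ` of the values `q_k y` of the homogeneous parts `q_k` of the approximant, and on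
`|t| = 1` bound them by `sup ‖g‖`. Hence `g (r • y)` is close to `∑_{k<N} r ^ k q_k y`, a finite
type polynomial in `y`, and uniform continuity of `g` lets `r → 1`.
-/

namespace MvPolynomial

theorem IsHomogeneous.eval_smul {σ R : Type*} [CommSemiring R] {Q : MvPolynomial σ R} {n : ℕ}
    (hQ : Q.IsHomogeneous n) (c : R) (v : σ → R) : eval (c • v) Q = c ^ n * eval v Q := by
  conv_lhs => rw [Q.as_sum]
  conv_rhs => rw [Q.as_sum]
  simp only [map_sum, eval_monomial, Finset.mul_sum]
  refine Finset.sum_congr rfl fun d hd => ?_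
  have hdeg : d.degree = n := by
    rw [Finsupp.degree_eq_weight_one]
    exact hQ (mem_support_iff.mp hd)
  simp only [Pi.smul_apply, smul_eq_mul, mul_pow, Finsupp.prod_mul]
  rw [Finsupp.prod, Finset.prod_pow_eq_pow_sum, ← Finsupp.degree_apply, hdeg]
  ring

end MvPolynomial

open Nat in
theorem iteratedDeriv_sum_mul_pow_zero {𝕜 : Type*} [NontriviallyNormedField 𝕜] (c : ℕ → 𝕜)
    (d k : ℕ) (hc : ∀ j, d ≤ j → c j = 0) :
    iteratedDeriv k (fun t : 𝕜 => ∑ j ∈ Finset.range d, c j * t ^ j) 0 = k ! * c k := by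
  rw [iteratedDeriv_fun_sum fun j _ => by fun_prop]
  simp only [iteratedDeriv_const_mul_field, iteratedDeriv_fun_pow_zero, Nat.cast_ite,
    Nat.cast_zero, mul_ite, mul_zero]
  rw [Finset.sum_ite_eq]
  split_ifs with hk
  · ring
  · rw [hc k (by simpa using hk), mul_zero]

namespace Complex

open Metric Finset Nat

theorem norm_iteratedDeriv_div_factorial_sub_le {F : ℂ → ℂ} {ρ ε : ℝ} (hρ : 0 < ρ)
    (hF : DiffContOnCl ℂ F (ball 0 ρ)) {c : ℕ → ℂ} {d : ℕ} (hc : ∀ j, d ≤ j → c j = 0)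
    (hFc : ∀ t ∈ sphere (0 : ℂ) ρ, ‖F t - ∑ j ∈ range d, c j * t ^ j‖ ≤ ε) (k : ℕ) :
    ‖iteratedDeriv k F 0 / (k ! : ℂ) - c k‖ ≤ ε / ρ ^ k := by
  have hP : Differentiable ℂ fun t : ℂ => ∑ j ∈ range d, c j * t ^ j := by fun_prop
  have hFk : ContDiffAt ℂ k F 0 :=
    (hF.differentiableOn.analyticAt (ball_mem_nhds 0 hρ)).contDiffAt
  have hcauchy := norm_iteratedDeriv_le_of_forall_mem_sphere_norm_le k hρ
    (hF.sub hP.diffContOnCl) hFc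
  rw [iteratedDeriv_sub hFk hP.contDiff.contDiffAt, iteratedDeriv_sum_mul_pow_zero c d k hc]
    at hcauchy
  have hdiv : iteratedDeriv k F 0 / (k ! : ℂ) - c k
      = (iteratedDeriv k F 0 - k ! * c k) / k ! := by
    rw [sub_div, mul_div_cancel_left₀ _ (Nat.cast_ne_zero.mpr k.factorial_ne_zero)]
  rw [hdiv, norm_div, norm_natCast, div_le_iff₀ (by positivity)]
  exact hcauchy.trans_eq (by ring)

theorem norm_sub_sum_taylor_le {F : ℂ → ℂ} {C r : ℝ} (hF : DiffContOnCl ℂ F (ball 0 1))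
    (hC : ∀ t ∈ sphere (0 : ℂ) 1, ‖F t‖ ≤ C) (hr0 : 0 ≤ r) (hr1 : r < 1) (N : ℕ) :
    ‖F r - ∑ n ∈ range N, iteratedDeriv n F 0 / n ! * r ^ n‖ ≤ C * r ^ N / (1 - r) := by
  have hterm : ∀ n, ‖iteratedDeriv n F 0 / n ! * (r : ℂ) ^ n‖ ≤ C * r ^ n := by
    intro n
    have hcauchy := norm_iteratedDeriv_le_of_forall_mem_sphere_norm_le n one_pos hF hC
    rw [one_pow, div_one] at hcauchy
    rw [norm_mul, norm_div, norm_pow, norm_real, Real.norm_of_nonneg hr0, norm_natCast]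
    gcongr
    rw [div_le_iff₀ (by positivity)]
    linarith
  have hsum : HasSum (fun n => iteratedDeriv n F 0 / n ! * (r : ℂ) ^ n) (F r) := by
    have := hasSum_taylorSeries_on_ball hF.differentiableOn (z := (r : ℂ))
      (by simpa [abs_of_nonneg hr0] using hr1)
    simpa [smul_eq_mul, div_eq_inv_mul, mul_comm, mul_assoc, mul_left_comm] using this
  rw [← hsum.tsum_eq, ← hsum.summable.sum_add_tsum_nat_add N, add_sub_cancel_left,
    div_eq_mul_inv]
  refine tsum_of_norm_bounded ((hasSum_geometric_of_lt_one hr0 hr1).mul_left (C * r ^ N))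
    fun i => (hterm _).trans_eq ?_
  ring

theorem norm_sub_sum_mul_pow_le {F : ℂ → ℂ} {C ρ ε r : ℝ}
    (hF : DifferentiableOn ℂ F (closedBall 0 1)) (hC : ∀ t ∈ sphere (0 : ℂ) 1, ‖F t‖ ≤ C)
    (hρ0 : 0 < ρ) (hρ1 : ρ ≤ 1) {c : ℕ → ℂ} {d : ℕ} (hc : ∀ j, d ≤ j → c j = 0)
    (hFc : ∀ t ∈ sphere (0 : ℂ) ρ, ‖F t - ∑ j ∈ range d, c j * t ^ j‖ ≤ ε)
    (hr0 : 0 ≤ r) (hr1 : r < 1) (N : ℕ) :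
    ‖F r - ∑ k ∈ range N, c k * r ^ k‖ ≤ C * r ^ N / (1 - r) + N * (ε / ρ ^ N) := by
  have hF' : ∀ s, 0 < s → s ≤ 1 → DiffContOnCl ℂ F (ball 0 s) := fun s hs hs1 =>
    (hF.mono (by rw [closure_ball 0 hs.ne']; exact closedBall_subset_closedBall hs1)).diffContOnCl
  have hε : 0 ≤ ε := (norm_nonneg _).trans (hFc ρ (by simp [abs_of_pos hρ0]))
  have hcoeff : ∀ k ∈ range N,
      ‖(iteratedDeriv k F 0 / (k ! : ℂ) - c k) * (r : ℂ) ^ k‖ ≤ ε / ρ ^ N := by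
    intro k hk
    rw [norm_mul, norm_pow, norm_real, Real.norm_of_nonneg hr0]
    calc _ ≤ ε / ρ ^ k * 1 :=
          mul_le_mul (norm_iteratedDeriv_div_factorial_sub_le hρ0 (hF' ρ hρ0 hρ1) hc hFc k)
            (pow_le_one₀ hr0 hr1.le) (by positivity) (by positivity)
      _ ≤ ε / ρ ^ N := by
          rw [mul_one]
          exact div_le_div_of_nonneg_left hε (by positivity)
            (pow_le_pow_of_le_one hρ0.le hρ1 (mem_range.mp hk).le)
  calc ‖F r - ∑ k ∈ range N, c k * r ^ k‖
      = ‖(F r - ∑ k ∈ range N, iteratedDeriv k F 0 / k ! * r ^ k)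
          + ∑ k ∈ range N, (iteratedDeriv k F 0 / (k ! : ℂ) - c k) * (r : ℂ) ^ k‖ := by
        congr 1
        simp only [sub_mul, sum_sub_distrib]
        ring
    _ ≤ C * r ^ N / (1 - r) + N * (ε / ρ ^ N) := by
        refine (norm_add_le _ _).trans (add_le_add
          (norm_sub_sum_taylor_le (hF' 1 one_pos le_rfl) hC hr0 hr1 N) ?_)
        refine (norm_sum_le _ _).trans ?_
        simpa using sum_le_card_nsmul _ _ _ hcoeff

end Complex

namespace ClusterValue

open MvPolynomial Metric Filter Topology Finset

variable {X Y : Type*} [NormedAddCommGroup X] [NormedSpace ℂ X]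
  [NormedAddCommGroup Y] [NormedSpace ℂ Y]

theorem aeval_coe_apply (Q : MvPolynomial (X →L[ℂ] ℂ) ℂ) (x : X) :
    aeval (fun φ : X →L[ℂ] ℂ => (⇑φ : X → ℂ)) Q x = eval (fun φ => φ x) Q := by
  simp [aeval_def, eval₂_eq, eval_eq]

theorem isFiniteTypePoly_iff {p : X → ℂ} :
    IsFiniteTypePoly X p ↔
      ∃ Q : MvPolynomial (X →L[ℂ] ℂ) ℂ, ∀ x, p x = eval (fun φ => φ x) Q := by
  rw [IsFiniteTypePoly, Algebra.adjoin_range_eq_range_aeval, AlgHom.mem_range]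
  simp only [funext_iff, aeval_coe_apply, eq_comm]

theorem IsFiniteTypePoly.comp {p : X → ℂ} (hp : IsFiniteTypePoly X p) (L : Y →L[ℂ] X) :
    IsFiniteTypePoly Y (fun y => p (L y)) := by
  obtain ⟨Q, hQ⟩ := isFiniteTypePoly_iff.mp hp
  exact isFiniteTypePoly_iff.mpr ⟨rename (fun φ => φ.comp L) Q, fun y => by
    rw [hQ, eval_rename]
    rfl⟩

theorem IsFiniteTypePoly.exists_homogeneous_expansion {p : X → ℂ} (hp : IsFiniteTypePoly X p) :
    ∃ (d : ℕ) (q : ℕ → X → ℂ), (∀ j, IsFiniteTypePoly X (q j)) ∧ (∀ j, d ≤ j → q j = 0) ∧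
      ∀ (t : ℂ) (x : X), p (t • x) = ∑ j ∈ range d, q j x * t ^ j := by
  obtain ⟨Q, hQ⟩ := isFiniteTypePoly_iff.mp hp
  refine ⟨Q.totalDegree + 1, fun j x => eval (fun φ => φ x) (homogeneousComponent j Q),
    fun j => isFiniteTypePoly_iff.mpr ⟨homogeneousComponent j Q, fun _ => rfl⟩,
    fun j hj => ?_, fun t x => ?_⟩
  · funext x
    show eval _ (homogeneousComponent j Q) = 0
    rw [homogeneousComponent_eq_zero j Q (by omega), map_zero]
  · have hv : (fun φ : X →L[ℂ] ℂ => φ (t • x)) = t • fun φ => φ x := by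
      funext φ
      simp
    conv_lhs => rw [hQ, hv, ← sum_homogeneousComponent Q]
    simp only [map_sum, (homogeneousComponent_isHomogeneous _ _).eval_smul, mul_comm]

theorem MemAu.comp_clm_s9 {f : Y → ℂ} (hf : MemAu Y f) (L : X →L[ℂ] Y) (hL : ‖L‖ ≤ 1) :
    MemAu X (fun x => f (L x)) := by
  obtain ⟨hfa, ⟨C, hC⟩, hfu⟩ := hf
  have hmaps : Set.MapsTo L (ball (0 : X) 1) (ball (0 : Y) 1) := fun x hx => by
    rw [mem_ball_zero_iff] at hx ⊢
    exact (L.le_of_opNorm_le hL x).trans_lt (by linarith)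
  exact ⟨hfa.comp (L.analyticOn _) hmaps, ⟨C, fun x hx => hC _ (hmaps hx)⟩,
    hfu.comp L.uniformContinuous.uniformContinuousOn hmaps⟩

theorem norm_smul_sub_sum_mul_pow_le {f p : X → ℂ} {q : ℕ → X → ℂ} {d : ℕ} {C ρ ε r : ℝ}
    (hf : DifferentiableOn ℂ f (ball 0 1)) (hC : ∀ x ∈ ball (0 : X) 1, ‖f x‖ ≤ C)
    (hρ0 : 0 < ρ) (hρ1 : ρ ≤ 1) (hfp : ∀ x ∈ ball (0 : X) ρ, ‖f x - p x‖ ≤ ε)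
    (hqd : ∀ j, d ≤ j → q j = 0) (hpq : ∀ (t : ℂ) x, p (t • x) = ∑ j ∈ range d, q j x * t ^ j)
    (hr0 : 0 ≤ r) (hr1 : r < 1) (N : ℕ) {x : X} (hx : x ∈ ball (0 : X) 1) :
    ‖f ((r : ℂ) • x) - ∑ k ∈ range N, q k x * r ^ k‖ ≤ C * r ^ N / (1 - r) + N * (ε / ρ ^ N) := by
  have hray : ∀ t : ℂ, ‖t‖ ≤ 1 → t • x ∈ ball (0 : X) 1 := fun t ht =>
    balanced_ball_zero.smul_mem ht hx
  have hFc : ∀ t ∈ sphere (0 : ℂ) ρ, ‖f (t • x) - ∑ j ∈ range d, q j x * t ^ j‖ ≤ ε := by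
    intro t ht
    rw [← hpq]
    refine hfp _ ?_
    rw [mem_ball_zero_iff, norm_smul, mem_sphere_zero_iff_norm.mp ht]
    exact mul_lt_of_lt_one_right hρ0 (mem_ball_zero_iff.mp hx)
  exact Complex.norm_sub_sum_mul_pow_le
    (hf.comp (differentiable_id.smul_const x).differentiableOn
      fun t ht => hray t (mem_closedBall_zero_iff.mp ht))
    (fun t ht => hC _ (hray t (mem_sphere_zero_iff_norm.mp ht).le)) hρ0 hρ1
    (fun j hj => by simp [hqd j hj]) hFc hr0 hr1 N

theorem memA_of_forall_approx_on_ball {f : X → ℂ} (hf : MemAu X f) {ρ : ℝ} (hρ0 : 0 < ρ)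
    (hρ1 : ρ ≤ 1)
    (happrox : ∀ ε > (0 : ℝ), ∃ p, IsFiniteTypePoly X p ∧ ∀ x ∈ ball (0 : X) ρ, ‖f x - p x‖ ≤ ε) :
    MemA X f := by
  obtain ⟨hfa, ⟨C, hC⟩, hfu⟩ := hf
  intro ε hε
  obtain ⟨δ, hδ, hfδ⟩ := Metric.uniformContinuousOn_iff.mp hfu (ε / 3) (by positivity)
  obtain ⟨r, hr0, hr1, hrδ⟩ : ∃ r : ℝ, 0 ≤ r ∧ r < 1 ∧ 1 - r < δ :=
    ⟨max 0 (1 - δ / 2), le_max_left _ _, max_lt one_pos (by linarith),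
      by linarith [le_max_right 0 (1 - δ / 2)]⟩
  obtain ⟨N, hN⟩ : ∃ N : ℕ, C * r ^ N / (1 - r) < ε / 3 := by
    have : Tendsto (fun N : ℕ => C * r ^ N / (1 - r)) atTop (𝓝 0) := by
      simpa using ((tendsto_pow_atTop_nhds_zero_of_lt_one hr0 hr1).const_mul C).div_const _
    exact (this.eventually (gt_mem_nhds (by positivity))).exists
  obtain ⟨p, hp, hfp⟩ := happrox (ε / 3 / (N + 1) * ρ ^ N) (by positivity)
  obtain ⟨d, q, hq, hqd, hpq⟩ := hp.exists_homogeneous_expansion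
  refine ⟨∑ k ∈ range N, (r : ℂ) ^ k • q k,
    Subalgebra.sum_mem _ fun k _ => Subalgebra.smul_mem _ (hq k) _, fun x hx => ?_⟩
  have hdist : dist x ((r : ℂ) • x) < δ := by
    rw [dist_eq_norm, ← one_smul ℂ x, smul_smul, mul_one, ← sub_smul, norm_smul,
      ← Complex.ofReal_one, ← Complex.ofReal_sub, Complex.norm_real,
      Real.norm_of_nonneg (by linarith)]
    nlinarith [norm_nonneg x, mem_ball_zero_iff.mp hx]
  have hdil : ‖f x - f ((r : ℂ) • x)‖ ≤ ε / 3 := by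
    rw [← dist_eq_norm]
    refine (hfδ x hx _ (balanced_ball_zero.smul_mem ?_ hx) hdist).le
    simpa [abs_of_nonneg hr0] using hr1.le
  have hpoly : (N : ℝ) * (ε / 3 / (N + 1) * ρ ^ N / ρ ^ N) ≤ ε / 3 := by
    rw [mul_div_cancel_right₀ _ (by positivity), mul_div_assoc', div_le_iff₀ (by positivity)]
    nlinarith
  have hray := norm_smul_sub_sum_mul_pow_le hfa.differentiableOn hC hρ0 hρ1 hfp hqd hpq hr0 hr1
    N hx
  calc ‖f x - (∑ k ∈ range N, (r : ℂ) ^ k • q k) x‖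
      = ‖f x - f ((r : ℂ) • x) + (f ((r : ℂ) • x) - ∑ k ∈ range N, q k x * r ^ k)‖ := by
        simp [mul_comm]
    _ ≤ ε / 3 + (ε / 3 + ε / 3) :=
        (norm_add_le _ _).trans (add_le_add hdil (hray.trans (add_le_add hN.le hpoly)))
    _ = ε := by ring

end ClusterValue

open Metric Filter Topology ClusterValue in
/-- If `A_u(B_X) = A(B_X)` (every uniformly continuous bounded analytic function on the ball
of `X` is a uniform limit of finite type polynomials) and `Y` is isomorphic to `X` as a
Banach space, then `A_u(B_Y) = A(B_Y)`. -/
theorem statement9 {X Y : Type*} [NormedAddCommGroup X] [NormedSpace ℂ X]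
    [NormedAddCommGroup Y] [NormedSpace ℂ Y]
    (T : Y ≃L[ℂ] X)
    (hX : ∀ f : X → ℂ, MemAu X f → MemA X f) :
    ∀ g : Y → ℂ, MemAu Y g → MemA Y g := by
  intro g hg
  set a : ℝ := ‖(T.symm : X →L[ℂ] Y)‖ + 1
  set ρ : ℝ := (a * ‖(T : Y →L[ℂ] X)‖ + 1)⁻¹
  have ha : 0 < a := by positivity
  have hL : ‖(a⁻¹ : ℂ) • (T.symm : X →L[ℂ] Y)‖ ≤ 1 := by
    rw [norm_smul, norm_inv, Complex.norm_real, Real.norm_of_nonneg ha.le, inv_mul_le_iff₀ ha]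
    linarith
  have hgL := hX _ (hg.comp_clm_s9 _ hL)
  refine memA_of_forall_approx_on_ball hg (ρ := ρ) (by positivity)
    (inv_le_one_of_one_le₀ (by simp only [le_add_iff_nonneg_left]; positivity)) fun ε hε => ?_
  obtain ⟨p, hp, hgp⟩ := hgL ε hε
  refine ⟨fun y => p ((a : ℂ) • T y), hp.comp ((a : ℂ) • (T : Y →L[ℂ] X)), fun y hy => ?_⟩
  have hLy : ((a⁻¹ : ℂ) • (T.symm : X →L[ℂ] Y)) ((a : ℂ) • T y) = y := by
    rw [smul_apply, map_smul, ContinuousLinearEquiv.coe_coe, T.symm_apply_apply, smul_smul,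
      inv_mul_cancel₀ (Complex.ofReal_ne_zero.mpr ha.ne'), one_smul]
  have hball : (a : ℂ) • T y ∈ ball (0 : X) 1 := by
    have hρy : (a * ‖(T : Y →L[ℂ] X)‖ + 1) * ‖y‖ < 1 := by
      calc (a * ‖(T : Y →L[ℂ] X)‖ + 1) * ‖y‖ < (a * ‖(T : Y →L[ℂ] X)‖ + 1) * ρ := by
            gcongr
            exact mem_ball_zero_iff.mp hy
        _ = 1 := mul_inv_cancel₀ (by positivity)
    rw [mem_ball_zero_iff, norm_smul, Complex.norm_real, Real.norm_of_nonneg ha.le]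
    calc a * ‖T y‖ ≤ a * (‖(T : Y →L[ℂ] X)‖ * ‖y‖) := by
          gcongr
          exact (T : Y →L[ℂ] X).le_opNorm y
      _ < 1 := by nlinarith [norm_nonneg y]
  simpa only [hLy] using hgp _ hball
end
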